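/- Proposition 2, part 2, L^d case. Let 𝒵 ⊆ ℝ be a Borel set, c ∈ [1, ∞), and let f, θ, r : 𝒵 → ℝ be Borel functions satisfying, for every z ∈ 𝒵, r(z) ∈ [1/c, c] and f(z) = r(z)·θ(z). Then for every Borel θ̃ ∈ Θ₁ and every d ∈ (0, ∞), ( ∫_𝒵 |θ(z) − θ̃(z)|^d dz )^{1/d} ≤ ((c² − 1)/c) · ( ∫_𝒵 |f(z)|^d dz )^{1/d}, where the integrals are with respect to Lebesgue measure and the inequality is in [0, ∞]. -/

import Mathlib

/- Both `θ z` and `θ̃ z` lie in the interval with endpoints `f z / c` and `c * f z`, whose length is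
`(c - 1/c) |f z|`; integrating this pointwise bound is monotonicity of the `L^d` gauge
`eLpNorm'`, which holds for every `d > 0`. -/

open MeasureTheory

/-- Membership of `θ̃` in the uniform outer set `Θ₁` determined by `f` and `c` on `𝒵`. -/
def MemTheta1 (𝒵 : Set ℝ) (f : ℝ → ℝ) (c : ℝ) (θt : ℝ → ℝ) : Prop :=
  ∀ z ∈ 𝒵,
    (0 ≤ f z → θt z ∈ Set.Icc (f z / c) (c * f z)) ∧
    (f z < 0 → θt z ∈ Set.Icc (c * f z) (f z / c))

open Set

lemma mem_uIcc_div_mul_of_eq_mul {c r θ x : ℝ} (hc : 0 < c) (hr : r ∈ Icc (1 / c) c)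
    (hx : x = r * θ) : θ ∈ uIcc (x / c) (c * x) := by
  subst hx
  have hcr : 1 ≤ c * r := by have := (div_le_iff₀ hc).1 hr.1; linarith
  rw [mem_uIcc, div_le_iff₀ hc, le_div_iff₀ hc]
  rcases le_total 0 θ with hθ | hθ
  · exact Or.inl ⟨by nlinarith [hr.2], by nlinarith⟩
  · exact Or.inr ⟨by nlinarith, by nlinarith [hr.2]⟩

lemma MemTheta1.mem_uIcc {𝒵 : Set ℝ} {f : ℝ → ℝ} {c : ℝ} {θt : ℝ → ℝ}
    (h : MemTheta1 𝒵 f c θt) {z : ℝ} (hz : z ∈ 𝒵) : θt z ∈ uIcc (f z / c) (c * f z) := by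
  rcases le_or_gt 0 (f z) with hf | hf
  · exact Icc_subset_uIcc ((h z hz).1 hf)
  · exact Icc_subset_uIcc' ((h z hz).2 hf)

lemma abs_mul_sub_div_self {c : ℝ} (hc : 1 ≤ c) (x : ℝ) :
    |c * x - x / c| = (c ^ 2 - 1) / c * |x| := by
  have hc0 : 0 < c := zero_lt_one.trans_le hc
  rw [show c * x - x / c = (c ^ 2 - 1) / c * x by field_simp, abs_mul,
    abs_of_nonneg (div_nonneg (by nlinarith) hc0.le)]

lemma MemTheta1.abs_sub_le {𝒵 : Set ℝ} {c : ℝ} (hc : 1 ≤ c) {f θ r θt : ℝ → ℝ}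
    (hr : ∀ z ∈ 𝒵, r z ∈ Icc (1 / c) c) (hf : ∀ z ∈ 𝒵, f z = r z * θ z)
    (hθt : MemTheta1 𝒵 f c θt) {z : ℝ} (hz : z ∈ 𝒵) :
    |θ z - θt z| ≤ (c ^ 2 - 1) / c * |f z| := by
  rw [← abs_mul_sub_div_self hc]
  exact abs_sub_le_of_uIcc_subset_uIcc <| uIcc_subset_uIcc (hθt.mem_uIcc hz)
    (mem_uIcc_div_mul_of_eq_mul (zero_lt_one.trans_le hc) (hr z hz) (hf z hz))

theorem stmt_6_general
    (𝒵 : Set ℝ) (h𝒵 : MeasurableSet 𝒵) (c : ℝ) (hc : 1 ≤ c) (f θ r θt : ℝ → ℝ)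
    (hr : ∀ z ∈ 𝒵, r z ∈ Set.Icc (1 / c) c)
    (hf : ∀ z ∈ 𝒵, f z = r z * θ z)
    (hθt : MemTheta1 𝒵 f c θt)
    (d : ℝ) (hd : 0 < d) :
    (∫⁻ z in 𝒵, ENNReal.ofReal |θ z - θt z| ^ d) ^ (1 / d)
      ≤ ENNReal.ofReal ((c ^ 2 - 1) / c) * (∫⁻ z in 𝒵, ENNReal.ofReal |f z| ^ d) ^ (1 / d) := by
  have hbound : ∀ᵐ z ∂volume.restrict 𝒵,
      ‖(θ - θt) z‖ₑ ≤ ENNReal.ofReal ((c ^ 2 - 1) / c) * ‖f z‖ₑ := by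
    refine ae_restrict_of_forall_mem h𝒵 fun z hz => ?_
    rw [Pi.sub_apply, Real.enorm_eq_ofReal_abs, Real.enorm_eq_ofReal_abs,
      ← ENNReal.ofReal_mul' (abs_nonneg _)]
    exact ENNReal.ofReal_le_ofReal (hθt.abs_sub_le hc hr hf hz)
  -- `ENNReal.ofReal x` is by definition the coercion of `x.toNNReal`.
  have hnorm := eLpNorm'_le_nnreal_smul_eLpNorm'_of_ae_le_mul'
    (c := ((c ^ 2 - 1) / c).toNNReal) hbound hd
  simp only [eLpNorm'_eq_lintegral_enorm, ENNReal.smul_def, smul_eq_mul, Pi.sub_apply,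
    Real.enorm_eq_ofReal_abs] at hnorm
  exact hnorm

/-- **Proposition 2, part 2, `L^d` case.**
If `r(z) ∈ [1/c, c]` and `f(z) = r(z)·θ(z)` on the Borel set `𝒵`, with `c ≥ 1`, `f, θ, r, θ̃`
Borel measurable and `θ̃ ∈ Θ₁`, then for every `d ∈ (0, ∞)`,
`(∫_𝒵 |θ − θ̃|^d dz)^{1/d} ≤ ((c² − 1)/c) · (∫_𝒵 |f|^d dz)^{1/d}`,
with Lebesgue integrals and the inequality in `[0, ∞]`. -/
theorem stmt_6
    (𝒵 : Set ℝ) (h𝒵 : MeasurableSet 𝒵) (c : ℝ) (hc : 1 ≤ c) (f θ r θt : ℝ → ℝ)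
    (hfm : Measurable f) (hθm : Measurable θ) (hrm : Measurable r) (hθtm : Measurable θt)
    (hr : ∀ z ∈ 𝒵, r z ∈ Set.Icc (1 / c) c)
    (hf : ∀ z ∈ 𝒵, f z = r z * θ z)
    (hθt : MemTheta1 𝒵 f c θt)
    (d : ℝ) (hd : 0 < d) :
    (∫⁻ z in 𝒵, ENNReal.ofReal |θ z - θt z| ^ d) ^ (1 / d)
      ≤ ENNReal.ofReal ((c ^ 2 - 1) / c) * (∫⁻ z in 𝒵, ENNReal.ofReal |f z| ^ d) ^ (1 / d) :=
  stmt_6_general 𝒵 h𝒵 c hc f θ r θt hr hf hθt d hd
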